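/- arXiv:1907.12229 — 2 statements merged into one kernel-verified Lean document; each statement's English description precedes it below -/
import Mathlib

section
/- Let n ≥ 2 and let L be an n×n real matrix that is essentially nonnegative (all off-diagonal entries nonnegative), irreducible, and has all column sums equal to zero. Let β_i > 0 and γ_i > 0 for i = 1,…,n with β_i − γ_i ≠ β_j − γ_j for some i ≠ j, and set F = diag(β_1,…,β_n) and D = diag(γ_1,…,γ_n). Then the function d ↦ s(F − D + d·L), where s(A) denotes the spectral bound of A (the maximum of the real parts of the eigenvalues of A), is strictly decreasing on [0,∞). -/
open Matrix Filter Set Topology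

/-- A square matrix is irreducible if it is not permutation-similar to a nontrivial block
upper triangular matrix; equivalently, for every nonempty proper subset `S` of indices there
are `i ∈ S` and `j ∉ S` with `A i j ≠ 0`. -/
def IsIrreducibleMatrix {n : ℕ} (A : Matrix (Fin n) (Fin n) ℝ) : Prop :=
  ∀ S : Set (Fin n), S.Nonempty → S ≠ Set.univ → ∃ i ∈ S, ∃ j ∈ Sᶜ, A i j ≠ 0

/-- The spectral bound of a real square matrix: the maximum of the real parts of its
(complex) eigenvalues, i.e. of the roots of its characteristic polynomial over `ℂ`. -/
noncomputable def spectralBound {n : ℕ} (A : Matrix (Fin n) (Fin n) ℝ) : ℝ :=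
  sSup {x : ℝ | ∃ μ : ℂ, ((A.map Complex.ofReal).charpoly).IsRoot μ ∧ μ.re = x}

/-- The spectral radius of a real square matrix: the maximum modulus of its (complex)
eigenvalues, i.e. of the roots of its characteristic polynomial over `ℂ`. -/
noncomputable def specRad {n : ℕ} (A : Matrix (Fin n) (Fin n) ℝ) : ℝ :=
  sSup {x : ℝ | ∃ μ : ℂ, ((A.map Complex.ofReal).charpoly).IsRoot μ ∧ ‖μ‖ = x}

/-!
Write `M d = diagonal δ + d • L` with `δ = β - γ`. For `d > 0` the matrix `M d` is essentially
nonnegative and irreducible, so by Perron–Frobenius `s (M d)` is an eigenvalue with positive right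
and left eigenvectors. Because the columns of `L` sum to zero,
`(x ᵥ* L) i = ∑ j, L j i * (x j - x i)`.

For `0 < d₁ < d₂`, let `v` be the positive left eigenvector at `d₂` and `θ = d₂ / d₁ > 1`.
Convexity of `t ↦ t ^ θ` gives `s (M d₂) • v ^ θ ≤ v ^ θ ᵥ* M d₁`, strictly at some index since `v`
is not constant (as `δ` is not) and `L` is irreducible; pairing with the right Perron vector at
`d₁` yields `s (M d₂) < s (M d₁)`. For `d₁ = 0`, summing the right eigen-equation at `d₂` exhibits
`s (M d₂)` as a positively weighted average of the non-constant `δ`, hence below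
`max δ ≤ s (diagonal δ)`.
-/

open scoped Finset

section Irreducible

variable {n : ℕ} {A B : Matrix (Fin n) (Fin n) ℝ}

theorem IsIrreducibleMatrix.transpose (h : IsIrreducibleMatrix A) :
    IsIrreducibleMatrix Aᵀ := by
  intro S hS hSu
  obtain ⟨i, hi, j, hj, hij⟩ := h Sᶜ (nonempty_compl.2 hSu) (compl_ne_univ.2 hS)
  exact ⟨j, not_not.1 hj, i, hi, hij⟩

theorem IsIrreducibleMatrix.of_ne_zero (h : IsIrreducibleMatrix A)
    (hAB : ∀ i j, i ≠ j → A i j ≠ 0 → B i j ≠ 0) : IsIrreducibleMatrix B := by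
  intro S hS hSu
  obtain ⟨i, hi, j, hj, hij⟩ := h S hS hSu
  exact ⟨i, hi, j, hj, hAB i j (fun h => hj (h ▸ hi)) hij⟩

theorem IsIrreducibleMatrix.exists_ne_zero_of_ne (h : IsIrreducibleMatrix A) {v : Fin n → ℝ}
    {a b : Fin n} (hab : v a ≠ v b) : ∃ i j, A i j ≠ 0 ∧ v i ≠ v j := by
  obtain ⟨i, hi, j, hj, hij⟩ :=
    h {j | v j = v a} ⟨a, rfl⟩ fun hS => hab (eq_univ_iff_forall.1 hS b).symm
  exact ⟨i, j, hij, fun hvij => hj (hvij.symm.trans hi)⟩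

end Irreducible

section Nonneg

variable {n : ℕ} {A : Matrix (Fin n) (Fin n) ℝ}

theorem le_one_add_mulVec (hA : ∀ i j, 0 ≤ A i j) {y : Fin n → ℝ} (hy : 0 ≤ y) :
    y ≤ (1 + A) *ᵥ y := by
  rw [add_mulVec, one_mulVec]
  exact le_add_of_nonneg_right fun i => dotProduct_nonneg_of_nonneg (hA i) hy

theorem le_one_add_pow_mulVec (hA : ∀ i j, 0 ≤ A i j) {x : Fin n → ℝ} (hx : 0 ≤ x) (k : ℕ) :
    x ≤ (1 + A) ^ k *ᵥ x := by
  induction k with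
  | zero => simp
  | succ k ih =>
    rw [pow_succ', ← mulVec_mulVec]
    exact ih.trans (le_one_add_mulVec hA (hx.trans ih))

theorem IsIrreducibleMatrix.min_card_lt_one_add_mulVec (hirr : IsIrreducibleMatrix A)
    (hA : ∀ i j, 0 ≤ A i j) {y : Fin n → ℝ} (hy : 0 ≤ y) (hy0 : y ≠ 0) :
    min (#{i | 0 < y i} + 1) n ≤ #{i | 0 < ((1 + A) *ᵥ y) i} := by
  set S : Finset (Fin n) := {i | 0 < y i}
  have hsub : S ⊆ ({i | 0 < ((1 + A) *ᵥ y) i} : Finset (Fin n)) := fun i hi => by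
    simp only [S, Finset.mem_filter, Finset.mem_univ, true_and] at hi ⊢
    exact hi.trans_le (le_one_add_mulVec hA hy i)
  by_cases hS : S = Finset.univ
  · calc min (#S + 1) n ≤ #S := by simp [hS]
      _ ≤ _ := Finset.card_le_card hsub
  have hSne : (S : Set (Fin n)).Nonempty := by
    obtain ⟨i, hi⟩ := Function.ne_iff.1 hy0
    exact ⟨i, by simpa [S] using (hy i).lt_of_ne' hi⟩
  obtain ⟨a, ha, b, hb, hab⟩ := hirr (S : Set (Fin n))ᶜ
    (nonempty_compl.2 fun h => hS (by exact_mod_cast h)) (compl_ne_univ.2 hSne)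
  have hb : 0 < y b := by simpa [S] using hb
  have hAy : 0 < ((1 + A) *ᵥ y) a := by
    rw [add_mulVec, one_mulVec, Pi.add_apply]
    refine add_pos_of_nonneg_of_pos (hy a) ?_
    calc 0 < A a b * y b := mul_pos ((hA a b).lt_of_ne' hab) hb
      _ ≤ (A *ᵥ y) a := Finset.single_le_sum (f := fun j => A a j * y j)
          (fun j _ => mul_nonneg (hA a j) (hy j)) (Finset.mem_univ b)
  refine (min_le_left _ _).trans (Finset.card_lt_card ⟨hsub, fun h => ha ?_⟩)
  simpa [S] using h (by simpa using hAy)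

theorem IsIrreducibleMatrix.one_add_pow_mulVec_pos (hirr : IsIrreducibleMatrix A)
    (hA : ∀ i j, 0 ≤ A i j) {x : Fin n → ℝ} (hx : 0 ≤ x) (hx0 : x ≠ 0) (i : Fin n) :
    0 < ((1 + A) ^ (n - 1) *ᵥ x) i := by
  have hcard : ∀ k, min (k + 1) n ≤ #{i | 0 < ((1 + A) ^ k *ᵥ x) i} := by
    intro k
    induction k with
    | zero =>
      obtain ⟨j, hj⟩ := Function.ne_iff.1 hx0
      refine (min_le_left _ _).trans (Finset.card_pos.2 ⟨j, ?_⟩)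
      simpa using (hx j).lt_of_ne' hj
    | succ k ih =>
      have hle := le_one_add_pow_mulVec hA hx k
      rw [pow_succ', ← mulVec_mulVec]
      refine le_trans ?_ (hirr.min_card_lt_one_add_mulVec hA (hx.trans hle)
        fun h => hx0 (le_antisymm (h ▸ hle) hx))
      omega
  have hsupp := hcard (n - 1)
  rw [Nat.sub_add_cancel i.pos, min_self] at hsupp
  have huniv := Finset.eq_univ_of_card _
    (le_antisymm (Finset.card_le_univ _) ((Fintype.card_fin n).trans_le hsupp))
  simpa using Finset.eq_univ_iff_forall.1 huniv i

end Nonneg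

section Perron

variable {n : ℕ} {A : Matrix (Fin n) (Fin n) ℝ}

theorem IsIrreducibleMatrix.lt_mulVec_one_add_pow_mulVec (hirr : IsIrreducibleMatrix A)
    (hA : ∀ i j, 0 ≤ A i j) {v : Fin n → ℝ} {r : ℝ} (hle : r • v ≤ A *ᵥ v)
    (hne : A *ᵥ v ≠ r • v) (i : Fin n) :
    r * ((1 + A) ^ (n - 1) *ᵥ v) i < (A *ᵥ (1 + A) ^ (n - 1) *ᵥ v) i := by
  have hcomm : Commute ((1 + A) ^ (n - 1)) A :=
    ((Commute.one_left A).add_left (Commute.refl A)).pow_left _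
  have h := hirr.one_add_pow_mulVec_pos hA (sub_nonneg.2 hle) (sub_ne_zero.2 hne) i
  rwa [mulVec_sub, mulVec_smul, mulVec_mulVec, hcomm.eq, ← mulVec_mulVec, Pi.sub_apply,
    Pi.smul_apply, smul_eq_mul, sub_pos] at h

/-- The eigenvector is `N y` for a maximiser `y` on the simplex of the Collatz–Wielandt function
`y ↦ minᵢ (A N y)ᵢ / (N y)ᵢ`, where `N = (1 + A) ^ (n - 1)` makes `N y` positive. -/
theorem IsIrreducibleMatrix.exists_pos_mulVec_eq_smul [NeZero n] (hirr : IsIrreducibleMatrix A)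
    (hA : ∀ i j, 0 ≤ A i j) : ∃ (r : ℝ) (v : Fin n → ℝ), (∀ i, 0 < v i) ∧ A *ᵥ v = r • v := by
  set N := (1 + A) ^ (n - 1)
  have hNpos : ∀ y ∈ stdSimplex ℝ (Fin n), ∀ i, 0 < (N *ᵥ y) i := fun y hy =>
    hirr.one_add_pow_mulVec_pos hA hy.1 fun h => by simpa [h] using hy.2
  let g : (Fin n → ℝ) → ℝ := fun y =>
    Finset.univ.inf' Finset.univ_nonempty fun i => (A *ᵥ N *ᵥ y) i / (N *ᵥ y) i
  have hg : ContinuousOn g (stdSimplex ℝ (Fin n)) := fun y hy =>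
    (ContinuousAt.finset_inf'_apply _ fun i _ =>
      (((continuous_apply i).comp (Continuous.matrix_mulVec continuous_const
        (Continuous.matrix_mulVec continuous_const continuous_id))).continuousAt.div
      ((continuous_apply i).comp (Continuous.matrix_mulVec continuous_const
        continuous_id)).continuousAt (hNpos y hy i).ne')).continuousWithinAt
  obtain ⟨y, hy, hmax⟩ := (isCompact_stdSimplex ℝ (Fin n)).exists_isMaxOn
    ⟨_, single_mem_stdSimplex ℝ 0⟩ hg
  set v := N *ᵥ y
  have hv := hNpos y hy
  refine ⟨g y, v, hv, ?_⟩
  by_contra hne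
  have hle : g y • v ≤ A *ᵥ v := fun i =>
    (le_div_iff₀ (hv i)).1 (Finset.inf'_le (fun i => (A *ᵥ v) i / v i) (Finset.mem_univ i))
  have hsum : 0 < ∑ i, v i := Finset.sum_pos (fun i _ => hv i) Finset.univ_nonempty
  set c := (∑ i, v i)⁻¹
  have hc : 0 < c := inv_pos.2 hsum
  have hcv : c • v ∈ stdSimplex ℝ (Fin n) := ⟨fun i => mul_nonneg hc.le (hv i).le,
    by simp [c, ← Finset.mul_sum, inv_mul_cancel₀ hsum.ne']⟩
  have hNv := hirr.one_add_pow_mulVec_pos hA (fun i => (hv i).le) fun h => by simpa [h] using hv 0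
  refine (show g (c • v) ≤ g y from hmax hcv).not_gt ((Finset.lt_inf'_iff _).2 fun i _ => ?_)
  rw [mulVec_smul, mulVec_smul, Pi.smul_apply, Pi.smul_apply, smul_eq_mul, smul_eq_mul,
    mul_div_mul_left _ _ hc.ne', lt_div_iff₀ (hNv i)]
  exact hirr.lt_mulVec_one_add_pow_mulVec hA hle hne i

end Perron

theorem Matrix.isRoot_charpoly_iff_exists_mulVec_eq_smul {ι K : Type*} [Fintype ι]
    [DecidableEq ι] [Field K] {M : Matrix ι ι K} {μ : K} :
    M.charpoly.IsRoot μ ↔ ∃ x ≠ 0, M *ᵥ x = μ • x := by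
  rw [Polynomial.IsRoot, eval_charpoly, ← exists_mulVec_eq_zero_iff]
  simp [sub_mulVec, sub_eq_zero, eq_comm]

theorem Matrix.isRoot_charpoly_add_smul_one {ι K : Type*} [Fintype ι] [DecidableEq ι] [Field K]
    {M : Matrix ι ι K} {μ : K} (hμ : M.charpoly.IsRoot μ) (c : K) :
    (M + c • 1).charpoly.IsRoot (μ + c) := by
  obtain ⟨x, hx, hMx⟩ := isRoot_charpoly_iff_exists_mulVec_eq_smul.1 hμ
  exact isRoot_charpoly_iff_exists_mulVec_eq_smul.2
    ⟨x, hx, by rw [add_mulVec, hMx, smul_mulVec, one_mulVec, add_smul]⟩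

section Spectral

variable {n : ℕ}

theorem isRoot_charpoly_map_ofReal {B : Matrix (Fin n) (Fin n) ℝ} {x : Fin n → ℝ} (hx : x ≠ 0)
    {r : ℝ} (hBx : B *ᵥ x = r • x) : (B.map Complex.ofReal).charpoly.IsRoot r := by
  refine isRoot_charpoly_iff_exists_mulVec_eq_smul.2 ⟨Complex.ofReal ∘ x, ?_, ?_⟩
  · exact fun h => hx (funext fun i => Complex.ofReal_injective (congrFun h i))
  · ext i
    exact (RingHom.map_mulVec Complex.ofRealHom B x i).symm.trans (by simp [hBx])

theorem le_spectralBound_of_mulVec_eq_smul {B : Matrix (Fin n) (Fin n) ℝ} {x : Fin n → ℝ}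
    (hx : x ≠ 0) {r : ℝ} (hBx : B *ᵥ x = r • x) : r ≤ spectralBound B :=
  le_csSup
    ((Polynomial.finite_setOfPred_isRoot (charpoly_monic _).ne_zero).image Complex.re).bddAbove
    ⟨r, isRoot_charpoly_map_ofReal hx hBx, Complex.ofReal_re r⟩

theorem norm_le_of_vecMul_eq_smul {A : Matrix (Fin n) (Fin n) ℝ} (hA : ∀ i j, 0 ≤ A i j)
    {u : Fin n → ℝ} (hu : ∀ i, 0 < u i) {ρ : ℝ} (hAu : u ᵥ* A = ρ • u) {μ : ℂ}
    (hμ : (A.map Complex.ofReal).charpoly.IsRoot μ) : ‖μ‖ ≤ ρ := by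
  obtain ⟨z, hz0, hz⟩ := isRoot_charpoly_iff_exists_mulVec_eq_smul.1 hμ
  set y : Fin n → ℝ := fun i => ‖z i‖
  have hle : ‖μ‖ • y ≤ A *ᵥ y := fun i => calc
    ‖μ‖ * ‖z i‖ = ‖(A.map Complex.ofReal *ᵥ z) i‖ := by simp [hz]
    _ = ‖∑ j, (A i j : ℂ) * z j‖ := rfl
    _ ≤ ∑ j, ‖(A i j : ℂ) * z j‖ := norm_sum_le _ _
    _ = (A *ᵥ y) i := by simp [mulVec, dotProduct, y, abs_of_nonneg (hA i _)]
  obtain ⟨k, hk⟩ := Function.ne_iff.1 hz0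
  have huy : 0 < u ⬝ᵥ y := Finset.sum_pos' (fun i _ => mul_nonneg (hu i).le (norm_nonneg _))
    ⟨k, Finset.mem_univ k, mul_pos (hu k) (norm_pos_iff.2 hk)⟩
  refine le_of_mul_le_mul_right ?_ huy
  calc ‖μ‖ * (u ⬝ᵥ y) = u ⬝ᵥ (‖μ‖ • y) := by rw [dotProduct_smul, smul_eq_mul]
    _ ≤ u ⬝ᵥ (A *ᵥ y) := dotProduct_le_dotProduct_of_nonneg_left hle fun i => (hu i).le
    _ = ρ * (u ⬝ᵥ y) := by rw [dotProduct_mulVec, hAu, smul_dotProduct, smul_eq_mul]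

/-- After a shift `B + c • 1` to a nonnegative matrix, the Perron root bounds the modulus, hence
the real part, of every eigenvalue. -/
theorem IsIrreducibleMatrix.exists_pos_eigenvectors_spectralBound [NeZero n]
    {B : Matrix (Fin n) (Fin n) ℝ} (hirr : IsIrreducibleMatrix B)
    (hB : ∀ i j, i ≠ j → 0 ≤ B i j) :
    ∃ v u : Fin n → ℝ, (∀ i, 0 < v i) ∧ (∀ i, 0 < u i) ∧
      B *ᵥ v = spectralBound B • v ∧ u ᵥ* B = spectralBound B • u := by
  set c : ℝ := ∑ i, |B i i|
  set A := B + c • 1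
  have hA : ∀ i j, 0 ≤ A i j := by
    intro i j
    rcases eq_or_ne i j with rfl | hij
    · have := Finset.single_le_sum (fun k _ => abs_nonneg (B k k)) (Finset.mem_univ i)
      simp only [A, Matrix.add_apply, Matrix.smul_apply, one_apply_eq, smul_eq_mul, mul_one]
      linarith [neg_abs_le (B i i)]
    · simpa [A, one_apply_ne hij] using hB i j hij
  have hirrA : IsIrreducibleMatrix A :=
    hirr.of_ne_zero fun i j hij h => by simpa [A, one_apply_ne hij] using h
  obtain ⟨ρ, v, hv, hAv⟩ := hirrA.exists_pos_mulVec_eq_smul hA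
  obtain ⟨ρ', u, hu, hAu⟩ := hirrA.transpose.exists_pos_mulVec_eq_smul fun i j => hA j i
  rw [mulVec_transpose] at hAu
  have hρ : ρ = ρ' := by
    have huv : 0 < u ⬝ᵥ v :=
      Finset.sum_pos (fun i _ => mul_pos (hu i) (hv i)) Finset.univ_nonempty
    have := dotProduct_mulVec u A v
    rw [hAv, hAu, dotProduct_smul, smul_dotProduct, smul_eq_mul, smul_eq_mul] at this
    exact mul_right_cancel₀ huv.ne' this
  subst hρ
  have hBv : B *ᵥ v = (ρ - c) • v := by
    rw [sub_smul, ← hAv, add_mulVec, smul_mulVec, one_mulVec, add_sub_cancel_right]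
  have hBu : u ᵥ* B = (ρ - c) • u := by
    rw [sub_smul, ← hAu, vecMul_add, vecMul_smul, vecMul_one, add_sub_cancel_right]
  have hs : spectralBound B = ρ - c := by
    have hv0 : v ≠ 0 := fun h => by simpa [h] using hv 0
    refine IsGreatest.csSup_eq
      ⟨⟨_, isRoot_charpoly_map_ofReal hv0 hBv, Complex.ofReal_re _⟩, ?_⟩
    rintro _ ⟨μ, hμ, rfl⟩
    have hAμ := norm_le_of_vecMul_eq_smul hA hu hAu (μ := μ + c) (by
      simpa [A, Matrix.map_add, Matrix.map_smul] using isRoot_charpoly_add_smul_one hμ (c : ℂ))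
    linarith [Complex.re_le_norm (μ + c), Complex.add_re μ c, Complex.ofReal_re c]
  exact ⟨v, u, hv, hu, hs ▸ hBv, hs ▸ hBu⟩

end Spectral

/-- The tangent-line inequality of the convex `t ↦ t ^ θ` at `a`, multiplied by `a`. -/
theorem mul_rpow_mul_sub_le {a b θ : ℝ} (ha : 0 < a) (hb : 0 < b) (hθ : 1 ≤ θ) :
    θ * a ^ θ * (b - a) ≤ (b ^ θ - a ^ θ) * a := by
  have h := one_add_mul_self_le_rpow_one_add (s := b / a - 1) (by linarith [div_pos hb ha]) hθ
  rw [add_sub_cancel, Real.div_rpow hb.le ha.le, le_div_iff₀ (Real.rpow_pos_of_pos ha θ)] at h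
  have hexp : (1 + θ * (b / a - 1)) * a ^ θ * a = a ^ θ * a + θ * a ^ θ * (b - a) := by
    field_simp
  nlinarith [mul_le_mul_of_nonneg_right h ha.le]

theorem mul_rpow_mul_sub_lt {a b θ : ℝ} (ha : 0 < a) (hb : 0 < b) (hθ : 1 < θ) (hab : b ≠ a) :
    θ * a ^ θ * (b - a) < (b ^ θ - a ^ θ) * a := by
  have h := one_add_mul_self_lt_rpow_one_add (s := b / a - 1) (by linarith [div_pos hb ha])
    (by rwa [sub_ne_zero, ne_eq, div_eq_one_iff_eq ha.ne']) hθ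
  rw [add_sub_cancel, Real.div_rpow hb.le ha.le, lt_div_iff₀ (Real.rpow_pos_of_pos ha θ)] at h
  have hexp : (1 + θ * (b / a - 1)) * a ^ θ * a = a ^ θ * a + θ * a ^ θ * (b - a) := by
    field_simp
  nlinarith [mul_lt_mul_of_pos_right h ha]

section DiagonalAddSmul

variable {n : ℕ} {L : Matrix (Fin n) (Fin n) ℝ}

theorem vecMul_eq_sum_mul_sub (hcol : ∀ j, ∑ i, L i j = 0) (x : Fin n → ℝ) (i : Fin n) :
    (x ᵥ* L) i = ∑ j, L j i * (x j - x i) := by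
  simp [vecMul, dotProduct, mul_sub, Finset.sum_sub_distrib, ← Finset.sum_mul, hcol, mul_comm]

theorem vecMul_diagonal_add_smul (δ x : Fin n → ℝ) (d : ℝ) (i : Fin n) :
    (x ᵥ* (diagonal δ + d • L)) i = x i * δ i + d * (x ᵥ* L) i := by
  simp [vecMul_add, vecMul_diagonal, vecMul_smul]

theorem rpow_vecMul_mul_sub_eq_sum (hcol : ∀ j, ∑ i, L i j = 0) (v : Fin n → ℝ) (θ : ℝ)
    (i : Fin n) :
    ((fun j => v j ^ θ) ᵥ* L) i * v i - θ * v i ^ θ * (v ᵥ* L) i =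
      ∑ j, L j i * ((v j ^ θ - v i ^ θ) * v i - θ * v i ^ θ * (v j - v i)) := by
  simp only [vecMul_eq_sum_mul_sub hcol, Finset.sum_mul, Finset.mul_sum,
    ← Finset.sum_sub_distrib]
  exact Finset.sum_congr rfl fun j _ => by ring

theorem diagonal_add_smul_apply_of_ne (δ : Fin n → ℝ) (d : ℝ) {i j : Fin n} (hij : i ≠ j) :
    (diagonal δ + d • L) i j = d * L i j := by
  simp [diagonal_apply_ne _ hij]

theorem diagonal_add_smul_apply_nonneg (hess : ∀ i j, i ≠ j → 0 ≤ L i j) (δ : Fin n → ℝ)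
    {d : ℝ} (hd : 0 ≤ d) {i j : Fin n} (hij : i ≠ j) : 0 ≤ (diagonal δ + d • L) i j :=
  (diagonal_add_smul_apply_of_ne δ d hij).symm ▸ mul_nonneg hd (hess i j hij)

theorem IsIrreducibleMatrix.diagonal_add_smul (hirr : IsIrreducibleMatrix L) (δ : Fin n → ℝ)
    {d : ℝ} (hd : d ≠ 0) : IsIrreducibleMatrix (diagonal δ + d • L) :=
  hirr.of_ne_zero fun i j hij hL => by
    rw [diagonal_add_smul_apply_of_ne δ d hij]
    exact mul_ne_zero hd hL

theorem exists_ne_of_vecMul_diagonal_add_smul_eq_smul (hcol : ∀ j, ∑ i, L i j = 0)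
    {δ : Fin n → ℝ} (hδ : ∃ i j, δ i ≠ δ j) {v : Fin n → ℝ} (hv : ∀ i, 0 < v i) {d s : ℝ}
    (h : v ᵥ* (diagonal δ + d • L) = s • v) : ∃ i j, v i ≠ v j := by
  by_contra! hconst
  have hδs : ∀ i, δ i = s := fun i => by
    have hi := congrFun h i
    simp only [vecMul_diagonal_add_smul, vecMul_eq_sum_mul_sub hcol, hconst _ i, sub_self,
      mul_zero, Finset.sum_const_zero, add_zero, Pi.smul_apply, smul_eq_mul] at hi
    exact mul_left_cancel₀ (hv i).ne' (hi.trans (mul_comm _ _))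
  obtain ⟨i, j, hij⟩ := hδ
  exact hij ((hδs i).trans (hδs j).symm)

theorem mul_rpow_mul_sub_sub_nonneg (hess : ∀ i j, i ≠ j → 0 ≤ L i j) {v : Fin n → ℝ}
    (hv : ∀ i, 0 < v i) {θ : ℝ} (hθ : 1 ≤ θ) (i j : Fin n) :
    0 ≤ L j i * ((v j ^ θ - v i ^ θ) * v i - θ * v i ^ θ * (v j - v i)) := by
  rcases eq_or_ne j i with rfl | hji
  · simp
  · exact mul_nonneg (hess j i hji) (sub_nonneg.2 (mul_rpow_mul_sub_le (hv i) (hv j) hθ))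

theorem mul_rpow_mul_vecMul_le (hess : ∀ i j, i ≠ j → 0 ≤ L i j)
    (hcol : ∀ j, ∑ i, L i j = 0) {v : Fin n → ℝ} (hv : ∀ i, 0 < v i) {θ : ℝ} (hθ : 1 ≤ θ)
    (i : Fin n) : θ * v i ^ θ * (v ᵥ* L) i ≤ ((fun j => v j ^ θ) ᵥ* L) i * v i := by
  rw [← sub_nonneg, rpow_vecMul_mul_sub_eq_sum hcol]
  exact Finset.sum_nonneg fun j _ => mul_rpow_mul_sub_sub_nonneg hess hv hθ i j

theorem mul_rpow_mul_vecMul_lt (hess : ∀ i j, i ≠ j → 0 ≤ L i j)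
    (hcol : ∀ j, ∑ i, L i j = 0) {v : Fin n → ℝ} (hv : ∀ i, 0 < v i) {θ : ℝ} (hθ : 1 < θ)
    {i j : Fin n} (hji : L j i ≠ 0) (hvji : v j ≠ v i) :
    θ * v i ^ θ * (v ᵥ* L) i < ((fun j => v j ^ θ) ᵥ* L) i * v i := by
  rw [← sub_pos, rpow_vecMul_mul_sub_eq_sum hcol]
  have hL : 0 < L j i := (hess j i fun h => hvji (h ▸ rfl)).lt_of_ne' hji
  exact Finset.sum_pos' (fun k _ => mul_rpow_mul_sub_sub_nonneg hess hv hθ.le i k)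
    ⟨j, Finset.mem_univ j, mul_pos hL (sub_pos.2 (mul_rpow_mul_sub_lt (hv i) (hv j) hθ hvji))⟩

theorem dotProduct_lt_dotProduct_of_pos_right {ι R : Type*} [Fintype ι] [Semiring R]
    [PartialOrder R] [IsStrictOrderedRing R] {u v w : ι → R} (huv : u ≤ v)
    (hlt : ∃ i, u i < v i) (hw : ∀ i, 0 < w i) : u ⬝ᵥ w < v ⬝ᵥ w :=
  Finset.sum_lt_sum (fun i _ => mul_le_mul_of_nonneg_right (huv i) (hw i).le)
    (hlt.imp fun i hi => ⟨Finset.mem_univ i, mul_lt_mul_of_pos_right hi (hw i)⟩)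

theorem spectralBound_diagonal_add_smul_lt_spectralBound_diagonal [NeZero n]
    (hess : ∀ i j, i ≠ j → 0 ≤ L i j) (hirr : IsIrreducibleMatrix L)
    (hcol : ∀ j, ∑ i, L i j = 0) {δ : Fin n → ℝ} (hδ : ∃ i j, δ i ≠ δ j) {d : ℝ} (hd : 0 < d) :
    spectralBound (diagonal δ + d • L) < spectralBound (diagonal δ) := by
  obtain ⟨u, -, hu, -, hMu, -⟩ := (hirr.diagonal_add_smul δ hd.ne'
    ).exists_pos_eigenvectors_spectralBound fun _ _ => diagonal_add_smul_apply_nonneg hess δ hd.le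
  obtain ⟨m, -, hm⟩ := Finset.exists_max_image Finset.univ δ Finset.univ_nonempty
  have hδm : ∃ i, δ i < δ m := by
    obtain ⟨i, j, hij⟩ := hδ
    by_contra! h
    exact hij (((hm i (Finset.mem_univ i)).antisymm (h i)).trans
      ((hm j (Finset.mem_univ j)).antisymm (h j)).symm)
  have h1 : (fun _ => 1) ᵥ* (diagonal δ + d • L) = δ := funext fun i => by
    simp [vecMul_diagonal_add_smul, vecMul_eq_sum_mul_sub hcol]
  have hδu : δ ⬝ᵥ u = spectralBound (diagonal δ + d • L) * ((fun _ => 1) ⬝ᵥ u) := by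
    conv_lhs => rw [← h1]
    rw [← dotProduct_mulVec, hMu, dotProduct_smul, smul_eq_mul]
  have hlt := dotProduct_lt_dotProduct_of_pos_right (w := u) (v := δ m • fun _ => (1 : ℝ))
    (fun i => by simpa using hm i (Finset.mem_univ i)) (by simpa using hδm) hu
  rw [hδu, smul_dotProduct, smul_eq_mul] at hlt
  calc spectralBound (diagonal δ + d • L) < δ m := lt_of_mul_lt_mul_right hlt
        (dotProduct_nonneg_of_nonneg (fun _ => zero_le_one) fun i => (hu i).le)
    _ ≤ spectralBound (diagonal δ) :=
        le_spectralBound_of_mulVec_eq_smul (x := Pi.single m 1)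
          (Pi.single_ne_zero_iff.2 one_ne_zero)
          (by ext k; rcases eq_or_ne k m with rfl | hk <;> simp [*])

theorem spectralBound_diagonal_add_smul_lt_of_lt [NeZero n]
    (hess : ∀ i j, i ≠ j → 0 ≤ L i j) (hirr : IsIrreducibleMatrix L)
    (hcol : ∀ j, ∑ i, L i j = 0) {δ : Fin n → ℝ} (hδ : ∃ i j, δ i ≠ δ j) {d₁ d₂ : ℝ}
    (hd₁ : 0 < d₁) (hd : d₁ < d₂) :
    spectralBound (diagonal δ + d₂ • L) < spectralBound (diagonal δ + d₁ • L) := by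
  have hd₂ : 0 < d₂ := hd₁.trans hd
  obtain ⟨-, v, -, hv, -, hv₂⟩ := (hirr.diagonal_add_smul δ hd₂.ne'
    ).exists_pos_eigenvectors_spectralBound fun _ _ => diagonal_add_smul_apply_nonneg hess δ hd₂.le
  obtain ⟨u, -, hu, -, hu₁, -⟩ := (hirr.diagonal_add_smul δ hd₁.ne'
    ).exists_pos_eigenvectors_spectralBound fun _ _ => diagonal_add_smul_apply_nonneg hess δ hd₁.le
  set s₂ := spectralBound (diagonal δ + d₂ • L)
  set θ := d₂ / d₁
  have hθ : 1 < θ := (one_lt_div hd₁).2 hd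
  set w : Fin n → ℝ := fun j => v j ^ θ
  have hgap : ∀ k, ((w ᵥ* (diagonal δ + d₁ • L)) k - s₂ * w k) * v k =
      d₁ * ((w ᵥ* L) k * v k - θ * w k * (v ᵥ* L) k) := fun k => by
    have hk := congrFun hv₂ k
    rw [vecMul_diagonal_add_smul, Pi.smul_apply, smul_eq_mul] at hk
    have hθd : d₁ * θ = d₂ := mul_div_cancel₀ _ hd₁.ne'
    rw [vecMul_diagonal_add_smul]
    linear_combination w k * hk + w k * (v ᵥ* L) k * hθd
  have hle : s₂ • w ≤ w ᵥ* (diagonal δ + d₁ • L) := fun k => by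
    have h := mul_nonneg hd₁.le (sub_nonneg.2 (mul_rpow_mul_vecMul_le hess hcol hv hθ.le k))
    rw [← hgap k] at h
    exact sub_nonneg.1 (nonneg_of_mul_nonneg_left h (hv k))
  obtain ⟨a, b, hab⟩ := exists_ne_of_vecMul_diagonal_add_smul_eq_smul hcol hδ hv hv₂
  obtain ⟨j, i, hji, hvji⟩ := hirr.exists_ne_zero_of_ne hab
  have hlt : s₂ * w i < (w ᵥ* (diagonal δ + d₁ • L)) i := by
    have h := mul_pos hd₁ (sub_pos.2 (mul_rpow_mul_vecMul_lt hess hcol hv hθ hji hvji))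
    rw [← hgap i] at h
    exact sub_pos.1 (pos_of_mul_pos_left h (hv i).le)
  have hw := dotProduct_lt_dotProduct_of_pos_right hle ⟨i, hlt⟩ hu
  rw [smul_dotProduct, ← dotProduct_mulVec, hu₁, dotProduct_smul, smul_eq_mul,
    smul_eq_mul] at hw
  exact lt_of_mul_lt_mul_right hw
    (Finset.sum_nonneg fun k _ => mul_nonneg (Real.rpow_nonneg (hv k).le θ) (hu k).le)

end DiagonalAddSmul

theorem spectralBound_FV_strictAnti_general {n : ℕ}
    (L : Matrix (Fin n) (Fin n) ℝ)
    (hess : ∀ i j, i ≠ j → 0 ≤ L i j)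
    (hirr : IsIrreducibleMatrix L)
    (hcol : ∀ j, ∑ i, L i j = 0)
    (β γ : Fin n → ℝ)
    (hhet : ∃ i j, i ≠ j ∧ β i - γ i ≠ β j - γ j) :
    StrictAntiOn
      (fun d : ℝ => spectralBound (Matrix.diagonal β - Matrix.diagonal γ + d • L))
      (Set.Ici 0) := by
  obtain ⟨a, b, -, hab⟩ := hhet
  have : NeZero n := NeZero.of_pos a.pos
  have hδ : ∃ i j, (fun k => β k - γ k) i ≠ (fun k => β k - γ k) j := ⟨a, b, hab⟩
  intro d₁ hd₁ d₂ _ hd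
  simp only [diagonal_sub]
  rcases (mem_Ici.1 hd₁).eq_or_lt with rfl | hd₁
  · simpa only [zero_smul, add_zero] using
      spectralBound_diagonal_add_smul_lt_spectralBound_diagonal hess hirr hcol hδ hd
  · exact spectralBound_diagonal_add_smul_lt_of_lt hess hirr hcol hδ hd₁ hd

/-- For an essentially nonnegative, irreducible `L` with zero column sums and
positive diagonal matrices `F = diag(β)`, `D = diag(γ)` with `β_i − γ_i` not all equal,
the spectral bound `d ↦ s(F − D + d·L)` is strictly decreasing on `[0,∞)`. -/
theorem spectralBound_FV_strictAnti {n : ℕ} (hn : 2 ≤ n)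
    (L : Matrix (Fin n) (Fin n) ℝ)
    (hess : ∀ i j, i ≠ j → 0 ≤ L i j)
    (hirr : IsIrreducibleMatrix L)
    (hcol : ∀ j, ∑ i, L i j = 0)
    (β γ : Fin n → ℝ) (hβ : ∀ i, 0 < β i) (hγ : ∀ i, 0 < γ i)
    (hhet : ∃ i j, i ≠ j ∧ β i - γ i ≠ β j - γ j) :
    StrictAntiOn
      (fun d : ℝ => spectralBound (Matrix.diagonal β - Matrix.diagonal γ + d • L))
      (Set.Ici 0) :=
  spectralBound_FV_strictAnti_general L hess hirr hcol β γ hhet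
end

section
/- Let n ≥ 2 and let L be an n×n real matrix that is essentially nonnegative (all off-diagonal entries nonnegative), irreducible, and has all column sums equal to zero. Let β_i > 0 and γ_i > 0 for i = 1,…,n, set F = diag(β_1,…,β_n) and D = diag(γ_1,…,γ_n), and let C_{ii} denote the diagonal cofactors of L. Then lim_{d→∞} s(F − D + d·L) = (Σ_{i=1}^n (β_i − γ_i)·C_{ii}) / (Σ_{i=1}^n C_{ii}), where s(A) denotes the spectral bound of A (the maximum of the real parts of the eigenvalues of A). -/
open Matrix Filter Set Topology

/-- The `(i,j)` cofactor of a square matrix: `(-1)^(i+j)` times the determinant of the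
matrix obtained by deleting row `i` and column `j`. -/
noncomputable def cofactor {n : ℕ} (A : Matrix (Fin (n+1)) (Fin (n+1)) ℝ) (i j : Fin (n+1)) : ℝ :=
  (-1 : ℝ) ^ ((i : ℕ) + (j : ℕ)) * (A.submatrix i.succAbove j.succAbove).det

def IsEssentiallyNonneg {ι : Type*} (A : Matrix ι ι ℝ) : Prop :=
  ∀ i j, i ≠ j → 0 ≤ A i j

section ZeroColumnSums

variable {ι : Type*} [Fintype ι] {L : Matrix ι ι ℝ}

theorem sum_mulVec_eq_zero_of_sum_col_eq_zero (hcol : ∀ j, ∑ i, L i j = 0) (v : ι → ℝ) :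
    ∑ i, (L *ᵥ v) i = 0 := by
  simp only [mulVec, dotProduct]
  rw [Finset.sum_comm]
  simp [← Finset.sum_mul, hcol]

theorem det_eq_zero_of_sum_col_eq_zero [DecidableEq ι] [Nonempty ι]
    (hcol : ∀ j, ∑ i, L i j = 0) : L.det = 0 := by
  refine exists_vecMul_eq_zero_iff.1 ⟨1, one_ne_zero, funext fun j => ?_⟩
  simpa [vecMul, dotProduct] using hcol j

/-- Each entry of `L *ᵥ |v|` dominates `σ * (L *ᵥ v) i = 0`, where `σ = ±1` is the sign of `v i`,
and the entries sum to zero. -/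
theorem mulVec_abs_eq_zero (hL : IsEssentiallyNonneg L) (hcol : ∀ j, ∑ i, L i j = 0)
    {v : ι → ℝ} (hv : L *ᵥ v = 0) : L *ᵥ |v| = 0 := by
  have hnonneg : ∀ i, 0 ≤ (L *ᵥ |v|) i := by
    intro i
    obtain ⟨σ, hσ, hσi⟩ : ∃ σ : ℝ, |σ| = 1 ∧ σ * v i = |v i| := by
      rcases le_or_gt 0 (v i) with h | h
      · exact ⟨1, by simp, by simp [abs_of_nonneg h]⟩
      · exact ⟨-1, by simp, by simp [abs_of_neg h]⟩
    have hterm : ∀ j, 0 ≤ L i j * (|v j| - σ * v j) := by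
      intro j
      rcases eq_or_ne i j with rfl | hij
      · simp [hσi]
      · refine mul_nonneg (hL i j hij) (sub_nonneg.2 ?_)
        calc σ * v j ≤ |σ * v j| := le_abs_self _
          _ = |v j| := by rw [abs_mul, hσ, one_mul]
    calc 0 ≤ ∑ j, L i j * (|v j| - σ * v j) := Finset.sum_nonneg fun j _ => hterm j
      _ = (L *ᵥ |v|) i - σ * (L *ᵥ v) i := by
        simp [mulVec, dotProduct, mul_sub, Finset.mul_sum, mul_left_comm]
      _ = (L *ᵥ |v|) i := by simp [hv]
  funext i
  exact (Finset.sum_eq_zero_iff_of_nonneg fun j _ => hnonneg j).1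
    (sum_mulVec_eq_zero_of_sum_col_eq_zero hcol _) i (Finset.mem_univ i)

end ZeroColumnSums

section Kernel

open Module
open LinearMap (ker)

theorem finrank_ker_mulVecLin_transpose {K ι : Type*} [Field K] [Fintype ι] (A : Matrix ι ι K) :
    finrank K (ker Aᵀ.mulVecLin) = finrank K (ker A.mulVecLin) := by
  have h := A.mulVecLin.finrank_range_add_finrank_ker
  have hT := Aᵀ.mulVecLin.finrank_range_add_finrank_ker
  have := A.rank_transpose
  unfold Matrix.rank at this
  omega

variable {ι : Type*} [Fintype ι] [Nonempty ι] {L : Matrix ι ι ℝ}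

theorem ker_mulVecLin_transpose_eq_span_one (hcol : ∀ j, ∑ i, L i j = 0)
    (hker : finrank ℝ (ker L.mulVecLin) = 1) : ker Lᵀ.mulVecLin = ℝ ∙ 1 := by
  symm
  apply Submodule.eq_of_le_of_finrank_eq
  · rw [Submodule.span_le, Set.singleton_subset_iff]
    show Lᵀ *ᵥ 1 = 0
    funext j
    simpa [mulVec, dotProduct] using hcol j
  · rw [finrank_span_singleton one_ne_zero, finrank_ker_mulVecLin_transpose, hker]

theorem range_mulVecLin_eq_ker_one_dotProduct [DecidableEq ι] (hcol : ∀ j, ∑ i, L i j = 0)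
    (hker : finrank ℝ (ker L.mulVecLin) = 1) :
    LinearMap.range L.mulVecLin = ker (dotProductEquiv ℝ ι 1) := by
  apply Submodule.eq_of_le_of_finrank_eq
  · rintro _ ⟨z, rfl⟩
    simp [one_dotProduct, sum_mulVec_eq_zero_of_sum_col_eq_zero hcol]
  · have h := L.mulVecLin.finrank_range_add_finrank_ker
    have h1 := Module.Dual.finrank_ker_add_one_of_ne_zero
      ((dotProductEquiv ℝ ι).map_ne_zero_iff.2 (one_ne_zero (α := ι → ℝ)))
    simp only [finrank_fintype_fun_eq_card] at h h1
    omega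

theorem exists_adjugate_eq_mul [DecidableEq ι] {u : ι → ℝ} (hdet : L.det = 0)
    (hker : ker L.mulVecLin = ℝ ∙ u) (hkerT : ker Lᵀ.mulVecLin = ℝ ∙ 1) :
    ∃ t, ∀ i j, L.adjugate i j = t * u i := by
  have hcols : ∀ j, (fun i => L.adjugate i j) ∈ ker L.mulVecLin := by
    intro j
    rw [LinearMap.mem_ker, mulVecLin_apply]
    funext k
    simpa [hdet, mul_apply, mulVec, dotProduct] using congrFun (congrFun L.mul_adjugate k) j
  have hrows : ∀ i, L.adjugate i ∈ ker Lᵀ.mulVecLin := by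
    intro i
    rw [LinearMap.mem_ker, mulVecLin_apply]
    funext k
    simpa [hdet, mul_apply, mulVec, dotProduct, mul_comm] using
      congrFun (congrFun L.adjugate_mul i) k
  simp only [hker, hkerT, Submodule.mem_span_singleton] at hcols hrows
  choose a ha using hcols
  choose b hb using hrows
  let j₀ := Classical.arbitrary ι
  refine ⟨a j₀, fun i j => ?_⟩
  calc L.adjugate i j = b i := by simpa using (congrFun (hb i) j).symm
    _ = L.adjugate i j₀ := by simpa using congrFun (hb i) j₀
    _ = a j₀ * u i := by simpa using (congrFun (ha j₀) i).symm

end Kernel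

section Irreducible

open LinearMap (ker)

variable {n : ℕ} {L : Matrix (Fin n) (Fin n) ℝ}

theorem pos_of_mulVec_eq_zero (hirr : IsIrreducibleMatrix L) (hL : IsEssentiallyNonneg L)
    {v : Fin n → ℝ} (hv : L *ᵥ v = 0) (hnonneg : 0 ≤ v) (hne : v ≠ 0) (i : Fin n) :
    0 < v i := by
  by_contra! hi
  obtain ⟨k, hk, j, hj, hkj⟩ := hirr {k | v k = 0} ⟨i, le_antisymm hi (hnonneg i)⟩
    fun h => hne (funext fun k => (h ▸ Set.mem_univ k :))
  have hterm : ∀ l ∈ Finset.univ, 0 ≤ L k l * v l := by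
    intro l _
    rcases eq_or_ne k l with rfl | hkl
    · simp [show v k = 0 from hk]
    · exact mul_nonneg (hL k l hkl) (hnonneg l)
  have hzero := (Finset.sum_eq_zero_iff_of_nonneg hterm).1 (congrFun hv k) j (Finset.mem_univ j)
  exact (mul_ne_zero hkj hj) hzero

theorem eq_zero_of_mulVec_eq_zero_of_apply_eq_zero (hirr : IsIrreducibleMatrix L)
    (hL : IsEssentiallyNonneg L) (hcol : ∀ j, ∑ i, L i j = 0) {v : Fin n → ℝ}
    (hv : L *ᵥ v = 0) {i : Fin n} (hi : v i = 0) : v = 0 := by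
  by_contra hne
  have := pos_of_mulVec_eq_zero hirr hL (mulVec_abs_eq_zero hL hcol hv) (abs_nonneg v)
    (by simpa using hne) i
  simp [hi] at this

theorem exists_pos_ker_mulVecLin_eq_span [NeZero n] (hirr : IsIrreducibleMatrix L)
    (hL : IsEssentiallyNonneg L) (hcol : ∀ j, ∑ i, L i j = 0) :
    ∃ u : Fin n → ℝ, (∀ i, 0 < u i) ∧ ker L.mulVecLin = ℝ ∙ u := by
  obtain ⟨w, hw0, hw⟩ := exists_mulVec_eq_zero_iff.2 (det_eq_zero_of_sum_col_eq_zero hcol)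
  have hLu := mulVec_abs_eq_zero hL hcol hw
  have hu := pos_of_mulVec_eq_zero hirr hL hLu (abs_nonneg w) (by simpa using hw0)
  refine ⟨|w|, hu, le_antisymm (fun v hv => ?_) ?_⟩
  · rw [LinearMap.mem_ker, mulVecLin_apply] at hv
    rw [Submodule.mem_span_singleton]
    refine ⟨v 0 / |w| 0, (sub_eq_zero.1 ?_).symm⟩
    refine eq_zero_of_mulVec_eq_zero_of_apply_eq_zero hirr hL hcol (i := 0) ?_ ?_
    · simp [mulVec_sub, mulVec_smul, hv, hLu]
    · simp [div_mul_cancel₀ _ (show |w 0| ≠ 0 from (hu 0).ne')]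
  · rw [Submodule.span_le, Set.singleton_subset_iff]
    exact hLu

theorem finrank_ker_mulVecLin_eq_one [NeZero n] (hirr : IsIrreducibleMatrix L)
    (hL : IsEssentiallyNonneg L) (hcol : ∀ j, ∑ i, L i j = 0) :
    Module.finrank ℝ (ker L.mulVecLin) = 1 := by
  obtain ⟨u, hu, hker⟩ := exists_pos_ker_mulVecLin_eq_span hirr hL hcol
  rw [hker, finrank_span_singleton fun h => (hu 0).ne' (congrFun h 0)]

/-- A kernel vector of `L.updateRow i (Pi.single i 1)` is a kernel vector of `L` vanishing
at `i`. -/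
theorem adjugate_apply_self_ne_zero (hirr : IsIrreducibleMatrix L) (hL : IsEssentiallyNonneg L)
    (hcol : ∀ j, ∑ i, L i j = 0) (i : Fin n) : L.adjugate i i ≠ 0 := by
  rw [adjugate_apply]
  intro h
  obtain ⟨v, hv0, hv⟩ := exists_mulVec_eq_zero_iff.2 h
  rw [updateRow_mulVec] at hv
  have hvi : v i = 0 := by simpa using congrFun hv i
  have hrow : ∀ k, k ≠ i → (L *ᵥ v) k = 0 := fun k hk => by
    simpa [hk] using congrFun hv k
  have hLv : L *ᵥ v = 0 := by
    funext k
    rcases eq_or_ne k i with rfl | hk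
    · simpa [Fintype.sum_eq_single k hrow] using sum_mulVec_eq_zero_of_sum_col_eq_zero hcol v
    · exact hrow k hk
  exact hv0 (eq_zero_of_mulVec_eq_zero_of_apply_eq_zero hirr hL hcol hLv hvi)

theorem exists_pos_mulVec_eq_zero_adjugate_eq_mul [NeZero n] (hirr : IsIrreducibleMatrix L)
    (hL : IsEssentiallyNonneg L) (hcol : ∀ j, ∑ i, L i j = 0) :
    ∃ u : Fin n → ℝ, (∀ i, 0 < u i) ∧ L *ᵥ u = 0 ∧
      ∃ t ≠ 0, ∀ i j, L.adjugate i j = t * u i := by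
  obtain ⟨u, hu, hker⟩ := exists_pos_ker_mulVecLin_eq_span hirr hL hcol
  have hLu : u ∈ ker L.mulVecLin := hker ▸ Submodule.mem_span_singleton_self u
  obtain ⟨t, ht⟩ := exists_adjugate_eq_mul (det_eq_zero_of_sum_col_eq_zero hcol) hker
    (ker_mulVecLin_transpose_eq_span_one hcol (finrank_ker_mulVecLin_eq_one hirr hL hcol))
  refine ⟨u, hu, hLu, t, fun h => adjugate_apply_self_ne_zero hirr hL hcol 0 ?_, ht⟩
  simp [ht, h]

end Irreducible

theorem cofactor_self_eq_adjugate {n : ℕ} (A : Matrix (Fin (n+1)) (Fin (n+1)) ℝ) (i : Fin (n+1)) :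
    cofactor A i i = A.adjugate i i :=
  (adjugate_fin_succ_eq_det_submatrix A i i).symm
section CollatzWielandt

variable {ι : Type*} [Fintype ι] {v : ι → ℝ} {c : ℝ} {μ : ℂ} {x : ι → ℂ}

/-- Evaluate the eigenvalue equation at a coordinate where `‖x j‖ / v j` is maximal. -/
theorem norm_le_of_mulVec_le {N : Matrix ι ι ℝ} (hN : ∀ i j, 0 ≤ N i j) (hv : ∀ i, 0 < v i)
    (hNv : N *ᵥ v ≤ c • v) (hx : x ≠ 0) (heig : N.map Complex.ofReal *ᵥ x = μ • x) :
    ‖μ‖ ≤ c := by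
  obtain ⟨j₀, hj₀⟩ := Function.ne_iff.1 hx
  obtain ⟨i, -, hi⟩ := Finset.univ.exists_max_image (fun j => ‖x j‖ / v j) ⟨j₀, Finset.mem_univ _⟩
  set r := ‖x i‖ / v i
  have hbound : ∀ j, ‖x j‖ ≤ r * v j := fun j => (div_le_iff₀ (hv j)).1 (hi j (Finset.mem_univ j))
  have hxi : 0 < ‖x i‖ := by
    have : 0 < r := pos_of_mul_pos_left ((norm_pos_iff.2 hj₀).trans_le (hbound j₀)) (hv j₀).le
    exact (div_pos_iff_of_pos_right (hv i)).1 this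
  have key : ‖μ‖ * ‖x i‖ ≤ c * ‖x i‖ := calc
    ‖μ‖ * ‖x i‖ = ‖∑ j, (N i j : ℂ) * x j‖ := by
      rw [← norm_mul, ← smul_eq_mul, ← Pi.smul_apply, ← heig]
      simp [mulVec, dotProduct]
    _ ≤ ∑ j, N i j * ‖x j‖ := (norm_sum_le _ _).trans (by simp [abs_of_nonneg (hN i _)])
    _ ≤ ∑ j, N i j * (r * v j) :=
      Finset.sum_le_sum fun j _ => mul_le_mul_of_nonneg_left (hbound j) (hN i j)
    _ = r * (N *ᵥ v) i := by simp [mulVec, dotProduct, Finset.mul_sum, mul_left_comm]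
    _ ≤ r * (c * v i) := mul_le_mul_of_nonneg_left (hNv i) (div_nonneg hxi.le (hv i).le)
    _ = c * ‖x i‖ := by simp only [r]; field_simp [(hv i).ne']
  exact le_of_mul_le_mul_right key hxi

/-- Shifting `M` by a multiple of the identity makes it entrywise nonnegative. -/
theorem re_le_of_mulVec_le [DecidableEq ι] {M : Matrix ι ι ℝ} (hM : IsEssentiallyNonneg M)
    (hv : ∀ i, 0 < v i) (hMv : M *ᵥ v ≤ c • v) (hx : x ≠ 0)
    (heig : M.map Complex.ofReal *ᵥ x = μ • x) : μ.re ≤ c := by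
  obtain ⟨t, ht⟩ : ∃ t, ∀ i, -M i i ≤ t := by
    obtain ⟨t, ht⟩ := (Set.finite_range fun i => -M i i).bddAbove
    exact ⟨t, fun i => ht ⟨i, rfl⟩⟩
  have hN : ∀ i j, 0 ≤ (M + t • 1) i j := by
    intro i j
    rcases eq_or_ne i j with rfl | hij
    · simp; linarith [ht i]
    · simpa [hij] using hM i j hij
  have hNv : (M + t • 1) *ᵥ v ≤ (c + t) • v := by
    intro i
    have := hMv i
    simp [add_mulVec, smul_mulVec] at this ⊢
    linarith
  have heig' : (M + t • 1).map Complex.ofReal *ᵥ x = (μ + t) • x := by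
    simp [Matrix.map_add, Matrix.map_smul, add_mulVec, smul_mulVec, heig, add_smul]
  have := norm_le_of_mulVec_le hN hv hNv hx heig'
  have := Complex.re_le_norm (μ + t)
  simp at this
  linarith

end CollatzWielandt

section SpectralBound

variable {n : ℕ}

theorem le_spectralBound (M : Matrix (Fin n) (Fin n) ℝ) {μ : ℂ}
    (hμ : (M.map Complex.ofReal).charpoly.IsRoot μ) : μ.re ≤ spectralBound M := by
  have hroots := Polynomial.finite_setOfPred_isRoot (M.map Complex.ofReal).charpoly_monic.ne_zero
  refine le_csSup ((hroots.image Complex.re).bddAbove.mono ?_) ⟨μ, hμ, rfl⟩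
  rintro _ ⟨ν, hν, rfl⟩
  exact ⟨ν, hν, rfl⟩

theorem spectralBound_le_of_mulVec_le [NeZero n] {M : Matrix (Fin n) (Fin n) ℝ}
    (hM : IsEssentiallyNonneg M) {v : Fin n → ℝ} (hv : ∀ i, 0 < v i) {c : ℝ}
    (hMv : M *ᵥ v ≤ c • v) : spectralBound M ≤ c := by
  obtain ⟨μ, hμ⟩ := IsAlgClosed.exists_root (M.map Complex.ofReal).charpoly
    (by simp [charpoly_degree_eq_dim, NeZero.ne n])
  refine csSup_le ⟨μ.re, μ, hμ, rfl⟩ ?_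
  rintro _ ⟨ν, hν, rfl⟩
  rw [Polynomial.IsRoot, eval_charpoly] at hν
  obtain ⟨x, hx, hνx⟩ := exists_mulVec_eq_zero_iff.2 hν
  refine re_le_of_mulVec_le hM hv hMv hx ?_
  rw [sub_mulVec, sub_eq_zero] at hνx
  simpa using hνx.symm

theorem le_spectralBound_of_eval_mul_eval_neg (M : Matrix (Fin n) (Fin n) ℝ) {a b : ℝ} (hab : a ≤ b)
    (h : M.charpoly.eval a * M.charpoly.eval b < 0) : a ≤ spectralBound M := by
  obtain ⟨x, hx, hroot⟩ : ∃ x ∈ Set.Icc a b, M.charpoly.eval x = 0 := by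
    rw [← Set.uIcc_of_le hab]
    refine intermediate_value_uIcc M.charpoly.continuous.continuousOn ?_
    rw [Set.mem_uIcc]
    rcases mul_neg_iff.1 h with h | h
    · exact Or.inr ⟨h.2.le, h.1.le⟩
    · exact Or.inl ⟨h.1.le, h.2.le⟩
  have hμ : (M.map Complex.ofReal).charpoly.IsRoot x := by
    rw [show M.map Complex.ofReal = M.map Complex.ofRealHom from rfl, charpoly_map]
    exact Polynomial.IsRoot.map hroot
  exact hx.1.trans (by simpa using le_spectralBound M hμ)

/-- For `b < b' < c`, the rescaled characteristic polynomials eventually change sign on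
`[b', c + 1]`. -/
theorem eventually_lt_spectralBound {α : Type*} {l : Filter α} {M : α → Matrix (Fin n) (Fin n) ℝ}
    {φ : α → ℝ} {κ c : ℝ} (hκ : κ ≠ 0)
    (hlim : ∀ x, Tendsto (fun a => (M a).charpoly.eval x / φ a) l (𝓝 (κ * (x - c))))
    {b : ℝ} (hb : b < c) : ∀ᶠ a in l, b < spectralBound (M a) := by
  obtain ⟨b', hbb', hb'c⟩ := exists_between hb
  have hneg : κ * (b' - c) * (κ * (c + 1 - c)) < 0 := by
    have := mul_self_pos.2 hκ
    nlinarith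
  filter_upwards [((hlim b').mul (hlim (c + 1))).eventually_lt_const hneg] with a ha
  refine hbb'.trans_le (le_spectralBound_of_eval_mul_eval_neg (M a) (b := c + 1) (by linarith) ?_)
  rw [div_mul_div_comm] at ha
  exact lt_of_not_ge fun h => ha.not_ge (div_nonneg h (mul_self_nonneg _))

end SpectralBound

section DetAsymptotics

variable {ι : Type*} [Fintype ι] [DecidableEq ι]

theorem hasDerivAt_det_add_smul (A B : Matrix ι ι ℝ) :
    HasDerivAt (fun ε : ℝ => (B + ε • A).det) (∑ i, (B.updateRow i (A i)).det) 0 := by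
  let f : ContinuousMultilinearMap ℝ (fun _ : ι => ι → ℝ) ℝ :=
    ⟨detRowAlternating.toMultilinearMap, continuous_id.matrix_det⟩
  have hpath : HasDerivAt (fun ε : ℝ => (fun i j => B i j + ε * A i j : ι → ι → ℝ)) A 0 := by
    refine hasDerivAt_pi.2 fun i => hasDerivAt_pi.2 fun j => ?_
    simpa using ((hasDerivAt_id (0 : ℝ)).mul_const (A i j)).const_add (B i j)
  have h := (f.hasFDerivAt B).comp_hasDerivAt_of_eq (0 : ℝ) hpath (by simp; rfl)
  exact h.congr_deriv (f.linearDeriv_apply _ _)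

theorem det_updateRow_diagonal (B : Matrix ι ι ℝ) (a : ι → ℝ) (i : ι) :
    (B.updateRow i (diagonal a i)).det = a i * B.adjugate i i := by
  have : diagonal a i = a i • Pi.single i 1 := by
    funext j
    simp [diagonal_apply, Pi.single_apply, eq_comm]
  rw [this, det_updateRow_smul, adjugate_apply]

/-- With `ε = d⁻¹`, `det (A + d • B) / d ^ n = d * det (B + ε • A)` is a difference quotient of
`ε ↦ det (B + ε • A)` at `0`. -/
theorem tendsto_det_add_smul_div_pow {n : ℕ} (A B : Matrix (Fin (n+1)) (Fin (n+1)) ℝ)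
    (hB : B.det = 0) :
    Tendsto (fun d : ℝ => (A + d • B).det / d ^ n) atTop
      (𝓝 (∑ i, (B.updateRow i (A i)).det)) := by
  refine ((hasDerivAt_det_add_smul A B).tendsto_slope_zero_right.comp
    tendsto_inv_atTop_nhdsGT_zero).congr' ?_
  filter_upwards [eventually_gt_atTop 0] with d hd
  have : A + d • B = d • (B + d⁻¹ • A) := by
    rw [smul_add, smul_smul, mul_inv_cancel₀ hd.ne', one_smul]
    exact add_comm _ _
  rw [this, det_smul]
  simp [hB, pow_succ]
  field_simp

theorem tendsto_eval_charpoly_diagonal_add_smul_div_pow {n : ℕ} (a : Fin (n+1) → ℝ)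
    {L : Matrix (Fin (n+1)) (Fin (n+1)) ℝ} (hL : L.det = 0) (x : ℝ) :
    Tendsto (fun d : ℝ => (diagonal a + d • L).charpoly.eval x / d ^ n) atTop
      (𝓝 ((-1) ^ n * ∑ i, (x - a i) * L.adjugate i i)) := by
  have hdet : (-L).det = 0 := by rw [det_neg, hL, mul_zero]
  have hadj : ∀ i, (-L).adjugate i i = (-1) ^ n * L.adjugate i i := by
    intro i
    rw [← neg_one_smul ℝ L, adjugate_smul]
    simp
  convert tendsto_det_add_smul_div_pow (diagonal fun i => x - a i) (-L) hdet using 2 with d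
  · rw [eval_charpoly]
    congr 2
    ext i j
    rcases eq_or_ne i j with rfl | hij
    · simp
      ring
    · simp [hij]
  · rw [Finset.mul_sum]
    refine Finset.sum_congr rfl fun i _ => ?_
    rw [det_updateRow_diagonal, hadj]
    ring

end DetAsymptotics

/-- `u + d⁻¹ • z` is an approximate positive eigenvector of `A + d • L`:
`(A + d • L) *ᵥ (u + d⁻¹ • z) = c • (u + d⁻¹ • z) + d⁻¹ • (A *ᵥ z - c • z)`. -/
theorem eventually_spectralBound_lt {n : ℕ} [NeZero n] {A L : Matrix (Fin n) (Fin n) ℝ}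
    (hA : IsEssentiallyNonneg A) (hL : IsEssentiallyNonneg L) {u z : Fin n → ℝ}
    (hu : ∀ i, 0 < u i) (hLu : L *ᵥ u = 0) {c : ℝ} (hLz : L *ᵥ z = c • u - A *ᵥ u) {b : ℝ}
    (hb : c < b) : ∀ᶠ d : ℝ in atTop, spectralBound (A + d • L) < b := by
  obtain ⟨b', hcb', hb'b⟩ := exists_between hb
  set r := A *ᵥ z - c • z
  have hinv : Tendsto (fun d : ℝ => d⁻¹) atTop (𝓝 0) := tendsto_inv_atTop_zero
  have hv : Tendsto (fun d : ℝ => u + d⁻¹ • z) atTop (𝓝 u) := by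
    simpa using tendsto_const_nhds.add (hinv.smul_const z)
  have hgap : Tendsto (fun d : ℝ => (b' - c) • (u + d⁻¹ • z) - d⁻¹ • r) atTop
      (𝓝 ((b' - c) • u)) := by
    simpa using (hv.const_smul (b' - c)).sub (hinv.smul_const r)
  have hpos : ∀ᶠ d : ℝ in atTop, ∀ i,
      0 < (u + d⁻¹ • z) i ∧ 0 < ((b' - c) • (u + d⁻¹ • z) - d⁻¹ • r) i := by
    refine eventually_all.2 fun i => ?_
    refine ((tendsto_pi_nhds.1 hv i).eventually_const_lt (hu i)).and
      ((tendsto_pi_nhds.1 hgap i).eventually_const_lt ?_)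
    simpa using mul_pos (sub_pos.2 hcb') (hu i)
  filter_upwards [eventually_gt_atTop 0, hpos] with d hd hpos
  have hMv : (A + d • L) *ᵥ (u + d⁻¹ • z) = c • (u + d⁻¹ • z) + d⁻¹ • r := by
    simp only [add_mulVec, mulVec_add, smul_mulVec, mulVec_smul, hLu, hLz, r, smul_zero]
    linear_combination (norm := module) inv_mul_cancel₀ hd.ne' • (c • u - A *ᵥ u)
  refine (spectralBound_le_of_mulVec_le (fun i j hij => ?_) (fun i => (hpos i).1) ?_).trans_lt hb'b
  · simpa using add_nonneg (hA i j hij) (mul_nonneg hd.le (hL i j hij))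
  · intro i
    have := (hpos i).2
    rw [hMv]
    simp only [Pi.add_apply, Pi.smul_apply, Pi.sub_apply, smul_eq_mul] at this ⊢
    linarith

theorem spectralBound_tendsto_atTop_general {n : ℕ}
    (L : Matrix (Fin (n+1)) (Fin (n+1)) ℝ)
    (hess : ∀ i j, i ≠ j → 0 ≤ L i j)
    (hirr : IsIrreducibleMatrix L)
    (hcol : ∀ j, ∑ i, L i j = 0)
    (β γ : Fin (n+1) → ℝ) :
    Filter.Tendsto
      (fun d : ℝ => spectralBound (Matrix.diagonal β - Matrix.diagonal γ + d • L))
      Filter.atTop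
      (nhds ((∑ i, (β i - γ i) * cofactor L i i) / (∑ i, cofactor L i i))) := by
  obtain ⟨u, hu, hLu, t, ht0, ht⟩ := exists_pos_mulVec_eq_zero_adjugate_eq_mul hirr hess hcol
  have hsum : 0 < ∑ i, u i := Finset.sum_pos (fun i _ => hu i) Finset.univ_nonempty
  set c := (∑ i, (β i - γ i) * u i) / ∑ i, u i
  have hcu : c * ∑ i, u i = ∑ i, (β i - γ i) * u i := div_mul_cancel₀ _ hsum.ne'
  have hlim : (∑ i, (β i - γ i) * cofactor L i i) / (∑ i, cofactor L i i) = c := by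
    simp only [cofactor_self_eq_adjugate, ht, mul_left_comm _ t, ← Finset.mul_sum]
    exact mul_div_mul_left _ _ ht0
  rw [hlim, diagonal_sub]
  refine tendsto_order.2 ⟨fun b hb => ?_, fun b hb => ?_⟩
  · refine eventually_lt_spectralBound (φ := fun d => d ^ n) (κ := (-1) ^ n * t * ∑ i, u i)
      (by simp [ht0, hsum.ne']) (fun x => ?_) hb
    convert tendsto_eval_charpoly_diagonal_add_smul_div_pow (fun i => β i - γ i)
      (det_eq_zero_of_sum_col_eq_zero hcol) x using 2
    have hterm : ∀ i, (x - (β i - γ i)) * L.adjugate i i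
        = t * (x * u i) - t * ((β i - γ i) * u i) := fun i => by rw [ht]; ring
    simp only [hterm, Finset.sum_sub_distrib, ← Finset.mul_sum, ← hcu]
    ring
  · obtain ⟨z, hz⟩ : c • u - diagonal (fun i => β i - γ i) *ᵥ u ∈ LinearMap.range L.mulVecLin := by
      rw [range_mulVecLin_eq_ker_one_dotProduct hcol (finrank_ker_mulVecLin_eq_one hirr hess hcol)]
      simp [one_dotProduct, mulVec_diagonal, hcu]
    exact eventually_spectralBound_lt (fun i j hij => by simp [hij]) hess hu hLu hz hb

/-- For an essentially nonnegative, irreducible `L` with zero column sums,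
`s(F − D + d·L) → (Σ (β_i − γ_i)·C_{ii}) / (Σ C_{ii})` as `d → ∞`. -/
theorem spectralBound_tendsto_atTop {n : ℕ} (hn : 1 ≤ n)
    (L : Matrix (Fin (n+1)) (Fin (n+1)) ℝ)
    (hess : ∀ i j, i ≠ j → 0 ≤ L i j)
    (hirr : IsIrreducibleMatrix L)
    (hcol : ∀ j, ∑ i, L i j = 0)
    (β γ : Fin (n+1) → ℝ) (hβ : ∀ i, 0 < β i) (hγ : ∀ i, 0 < γ i) :
    Filter.Tendsto
      (fun d : ℝ => spectralBound (Matrix.diagonal β - Matrix.diagonal γ + d • L))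
      Filter.atTop
      (nhds ((∑ i, (β i - γ i) * cofactor L i i) / (∑ i, cofactor L i i))) :=
  spectralBound_tendsto_atTop_general L hess hirr hcol β γ
end
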